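/- Let H be a 2-connected graph. Then c'(H) = c(H), where c(H) is the supremum of e(G)/v(G) and c'(H) is the supremum of e(G)/(v(G)-1), both taken over graphs G (with v(G) ≥ 2 in the latter case) not containing H as a minor. -/

import Mathlib

/-!
Gluing `k` copies of an `H`-minor-free graph `G` on `n` vertices at one vertex gives a graph on
`k (n - 1) + 1` vertices with `k e(G)` edges. It is still `H`-minor-free when `H` is 2-connected:
every branch set avoiding the glue vertex lies in a single copy, and since deleting the one branch
set through the glue vertex leaves `H` connected, all of them lie in the same copy; folding the
other copies onto the glue vertex then gives an `H`-minor in `G`. As `k → ∞` the densities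
`k e(G) / (k (n - 1) + 1)` tend to `e(G) / (n - 1)`, so every value in the definition of `c'(H)`
is a limit of values in that of `c(H)`; conversely `e(G) / n ≤ e(G) / (n - 1)`.
-/

/-- `H` is a minor of `G`: there are nonempty, pairwise-disjoint, connected branch sets
in `G`, one for each vertex of `H`, with an edge of `G` between the branch sets of any
pair of vertices adjacent in `H`. -/
def SimpleGraph.HasMinor {β α : Type*} (G : SimpleGraph β) (H : SimpleGraph α) : Prop :=
  ∃ f : α → Set β,
    (∀ a, (f a).Nonempty) ∧
    (∀ a, (G.induce (f a)).Connected) ∧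
    (Pairwise fun a b => Disjoint (f a) (f b)) ∧
    ∀ a b, H.Adj a b → ∃ u ∈ f a, ∃ v ∈ f b, G.Adj u v

/-- The extremal function `c(H)`: the supremum of `e(G)/v(G)` over all non-null
finite graphs `G` not containing `H` as a minor. -/
noncomputable def cFun {α : Type*} (H : SimpleGraph α) : ℝ :=
  sSup {x | ∃ (n : ℕ) (G : SimpleGraph (Fin n)), 0 < n ∧ ¬ G.HasMinor H ∧
    x = (Nat.card G.edgeSet : ℝ) / (n : ℝ)}

/-- The vertex cover number `τ(H)`: the least size of a set of vertices meeting
every edge of `H`. -/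
noncomputable def coverNumber {α : Type*} (H : SimpleGraph α) : ℕ :=
  sInf {k | ∃ X : Set α, Nat.card X = k ∧ ∀ ⦃u v⦄, H.Adj u v → u ∈ X ∨ v ∈ X}

/-- `c'(H)`: the supremum of `e(G)/(v(G)-1)` over graphs `G` with at least two
vertices not containing `H` as a minor. -/
noncomputable def cPrime {α : Type*} (H : SimpleGraph α) : ℝ :=
  sSup {x | ∃ (n : ℕ) (G : SimpleGraph (Fin n)), 2 ≤ n ∧ ¬ G.HasMinor H ∧
    x = (Nat.card G.edgeSet : ℝ) / ((n : ℝ) - 1)}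

/-- `H` is 2-connected: it has at least 3 vertices and deleting any single vertex
leaves it connected. -/
def TwoConnected {α : Type*} [Fintype α] (H : SimpleGraph α) : Prop :=
  3 ≤ Fintype.card α ∧ ∀ v : α, (H.induce {u | u ≠ v}).Connected

open Filter Topology

namespace SimpleGraph

variable {α β γ : Type*} {H : SimpleGraph α} {G : SimpleGraph β} {G' : SimpleGraph γ}

def IsWeakHom (G : SimpleGraph β) (G' : SimpleGraph γ) (r : β → γ) : Prop :=
  ∀ ⦃x y⦄, G.Adj x y → r x = r y ∨ G'.Adj (r x) (r y)

theorem IsWeakHom.reachable {r : β → γ} (hr : IsWeakHom G G' r) {x y : β}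
    (h : G.Reachable x y) : G'.Reachable (r x) (r y) := by
  obtain ⟨p⟩ := h
  induction p with
  | nil => rfl
  | cons hxy _ ih => exact (hr hxy).elim (fun h => h ▸ ih) fun h => h.reachable.trans ih

theorem Reachable.eq_of_forall_adj_eq {f : β → γ} (hf : ∀ ⦃x y⦄, G.Adj x y → f x = f y)
    {x y : β} (h : G.Reachable x y) : f x = f y :=
  reachable_bot.1 <| IsWeakHom.reachable (G' := ⊥) (fun _ _ hxy => .inl (hf hxy)) h

theorem IsWeakHom.connected_induce_image {r : β → γ} (hr : IsWeakHom G G' r) {s : Set β}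
    (hs : (G.induce s).Connected) : (G'.induce (r '' s)).Connected := by
  let r' : s → r '' s := fun x => ⟨r x, x.1, x.2, rfl⟩
  have hr' : IsWeakHom (G.induce s) (G'.induce (r '' s)) r' := fun x y hxy =>
    (hr hxy).imp Subtype.ext id
  obtain ⟨x₀⟩ := hs.nonempty
  refine (connected_iff_exists_forall_reachable _).2 ⟨r' x₀, ?_⟩
  rintro ⟨_, x, hx, rfl⟩
  exact hr'.reachable (hs.preconnected x₀ ⟨x, hx⟩)

structure IsMinorModel (G : SimpleGraph β) (H : SimpleGraph α) (f : α → Set β) : Prop where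
  nonempty : ∀ a, (f a).Nonempty
  connected : ∀ a, (G.induce (f a)).Connected
  disjoint : Pairwise fun a b => Disjoint (f a) (f b)
  adj : ∀ a b, H.Adj a b → ∃ u ∈ f a, ∃ v ∈ f b, G.Adj u v

theorem hasMinor_iff_exists_isMinorModel : G.HasMinor H ↔ ∃ f, G.IsMinorModel H f :=
  ⟨fun ⟨f, h₁, h₂, h₃, h₄⟩ => ⟨f, h₁, h₂, h₃, h₄⟩,
    fun ⟨f, ⟨h₁, h₂, h₃, h₄⟩⟩ => ⟨f, h₁, h₂, h₃, h₄⟩⟩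

theorem IsMinorModel.image {f : α → Set β} (hf : G.IsMinorModel H f) {r : β → γ}
    (hr : IsWeakHom G G' r) (hdisj : Pairwise fun a b => Disjoint (r '' f a) (r '' f b)) :
    G'.IsMinorModel H fun a => r '' f a where
  nonempty a := (hf.nonempty a).image r
  connected a := hr.connected_induce_image (hf.connected a)
  disjoint := hdisj
  adj a b hab := by
    obtain ⟨u, hu, v, hv, huv⟩ := hf.adj a b hab
    refine ⟨r u, ⟨u, hu, rfl⟩, r v, ⟨v, hv, rfl⟩, (hr huv).resolve_left fun h => ?_⟩
    exact Set.disjoint_left.1 (hdisj hab.ne) ⟨u, hu, rfl⟩ ⟨v, hv, h.symm⟩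

theorem HasMinor.map (φ : G ↪g G') (h : G.HasMinor H) : G'.HasMinor H := by
  obtain ⟨f, hf⟩ := hasMinor_iff_exists_isMinorModel.1 h
  exact hasMinor_iff_exists_isMinorModel.2 ⟨_, hf.image (fun _ _ h => .inr (φ.map_adj_iff.2 h))
    fun a b hab =>
      (hf.disjoint hab).image φ.injective.injOn (Set.subset_univ _) (Set.subset_univ _)⟩

theorem not_hasMinor_of_card_lt [Finite β] (G : SimpleGraph β) (h : Nat.card β < Nat.card α) :
    ¬ G.HasMinor H := by
  rintro ⟨f, hne, -, hdisj, -⟩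
  refine h.not_ge (Nat.card_le_card_of_injective (fun a => (hne a).some) fun a b hab => ?_)
  replace hab : (hne a).some = (hne b).some := hab
  by_contra hne'
  exact Set.disjoint_left.1 (hdisj hne') (hne a).some_mem (hab ▸ (hne b).some_mem)

theorem card_dart_eq_two_mul_card_edgeSet [Fintype β] (G : SimpleGraph β) :
    Nat.card G.Dart = 2 * Nat.card G.edgeSet := by
  classical
  rw [Nat.card_eq_fintype_card, dart_card_eq_twice_card_edges, Nat.card_eq_card_toFinset]
  rfl

end SimpleGraph

section TwoConnected

variable {α : Type*} [Fintype α] {H : SimpleGraph α}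

theorem TwoConnected.connected (hH : TwoConnected H) : H.Connected := by
  classical
  have : Nonempty α := Fintype.card_pos_iff.1 (by linarith [hH.1])
  refine (SimpleGraph.connected_iff H).2 ⟨fun u w => ?_, this⟩
  obtain ⟨v, hv⟩ : (Finset.univ \ {u, w}).Nonempty := by
    rw [← Finset.card_pos]
    have := Finset.le_card_sdiff {u, w} Finset.univ
    have := Finset.card_le_two (a := u) (b := w)
    rw [Finset.card_univ] at *
    have := hH.1
    omega
  have hvu : u ≠ v := by rintro rfl; simp at hv
  have hvw : w ≠ v := by rintro rfl; simp at hv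
  exact ((hH.2 v).preconnected ⟨u, hvu⟩ ⟨w, hvw⟩).map (SimpleGraph.Embedding.induce _).toHom

theorem TwoConnected.connected_induce_of_subsingleton_compl (hH : TwoConnected H) {S : Set α}
    (hS : Sᶜ.Subsingleton) : (H.induce S).Connected := by
  rcases Sᶜ.eq_empty_or_nonempty with h | ⟨a₀, ha₀⟩
  · rw [Set.compl_empty_iff.1 h]
    exact (SimpleGraph.induceUnivIso H).connected_iff.2 hH.connected
  · obtain rfl : S = {a | a ≠ a₀} := Set.ext fun a =>
      ⟨fun ha h => ha₀ (h ▸ ha), fun ha => by_contra fun h => ha (hS h ha₀)⟩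
    exact hH.2 a₀

end TwoConnected

namespace SimpleGraph

namespace GlueCopies

variable {V : Type*} [DecidableEq V] {v₀ : V} {k : ℕ}

variable (v₀) in
/-- Vertex `u` of the `i`-th copy; the copies of `v₀` are all identified with `none`. -/
def lift (i : Fin k) (u : V) : Option (Fin k × {u : V // u ≠ v₀}) :=
  if h : u = v₀ then none else some (i, ⟨u, h⟩)

@[simp] theorem lift_self (i : Fin k) : lift v₀ i v₀ = none := dif_pos rfl

theorem lift_of_ne {u : V} (hu : u ≠ v₀) (i : Fin k) : lift v₀ i u = some (i, ⟨u, hu⟩) :=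
  dif_neg hu

theorem lift_eq_lift_iff {i j : Fin k} {u w : V} :
    lift v₀ i u = lift v₀ j w ↔ u = w ∧ (u = v₀ ∨ i = j) := by
  unfold lift
  split_ifs <;> aesop

theorem lift_injective (i : Fin k) : Function.Injective (lift v₀ i) :=
  fun _ _ h => (lift_eq_lift_iff.1 h).1

variable (v₀) in
def liftEmbedding (i : Fin k) : V ↪ Option (Fin k × {u : V // u ≠ v₀}) :=
  ⟨lift v₀ i, lift_injective i⟩

theorem map_fst_of_mem_range_lift {i : Fin k} {x : Option (Fin k × {u : V // u ≠ v₀})}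
    (hx : x ∈ Set.range (lift v₀ i)) (hx₀ : x ≠ none) : x.map Prod.fst = some i := by
  obtain ⟨u, rfl⟩ := hx
  have hu : u ≠ v₀ := by rintro rfl; exact hx₀ (lift_self i)
  simp [lift_of_ne hu]

theorem mem_range_lift_of_map_fst {i : Fin k} {x : Option (Fin k × {u : V // u ≠ v₀})}
    (hx : x.map Prod.fst = some i) : x ∈ Set.range (lift v₀ i) := by
  obtain ⟨⟨j, u⟩, rfl, rfl⟩ := Option.map_eq_some_iff.1 hx
  exact ⟨u, lift_of_ne u.2 _⟩

def fold (i : Fin k) : Option (Fin k × {u : V // u ≠ v₀}) → V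
  | some (j, u) => if j = i then u else v₀
  | none => v₀

@[simp] theorem fold_lift_self (i : Fin k) (u : V) : fold i (lift v₀ i u) = u := by
  by_cases hu : u = v₀
  · subst hu; simp [fold]
  · simp [lift_of_ne hu, fold]

theorem fold_lift_of_ne {i j : Fin k} (h : j ≠ i) (u : V) : fold i (lift v₀ j u) = v₀ := by
  by_cases hu : u = v₀
  · subst hu; simp [fold]
  · simp [lift_of_ne hu, fold, h]

theorem fold_of_notMem_range_lift {i : Fin k} {x : Option (Fin k × {u : V // u ≠ v₀})}
    (hx : x ∉ Set.range (lift v₀ i)) : fold i x = v₀ := by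
  match x with
  | none => exact rfl
  | some (j, u) =>
    have hj : j ≠ i := by rintro rfl; exact hx ⟨u, lift_of_ne u.2 j⟩
    simp [fold, hj]

end GlueCopies

open GlueCopies

variable {α V : Type*} [DecidableEq V] {H : SimpleGraph α} {G : SimpleGraph V} {v₀ : V}
  {k : ℕ}

def glueCopies (G : SimpleGraph V) (v₀ : V) (k : ℕ) :
    SimpleGraph (Option (Fin k × {u : V // u ≠ v₀})) :=
  ⨆ i, G.map (liftEmbedding v₀ i)

theorem glueCopies_adj {x y : Option (Fin k × {u : V // u ≠ v₀})} :
    (glueCopies G v₀ k).Adj x y ↔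
      ∃ i u w, G.Adj u w ∧ lift v₀ i u = x ∧ lift v₀ i w = y := by
  rw [glueCopies, iSup_adj]
  exact exists_congr fun i => map_adj (liftEmbedding v₀ i) G x y

namespace GlueCopies

theorem isWeakHom_fold (i : Fin k) : IsWeakHom (glueCopies G v₀ k) G (fold i) := by
  intro x y h
  obtain ⟨j, u, w, huw, rfl, rfl⟩ := glueCopies_adj.1 h
  by_cases hj : j = i
  · subst hj
    exact .inr (by simpa using huw)
  · simp [fold_lift_of_ne hj]

theorem map_fst_eq_of_adj {x y : Option (Fin k × {u : V // u ≠ v₀})}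
    (h : (glueCopies G v₀ k).Adj x y) (hx : x ≠ none) (hy : y ≠ none) :
    x.map Prod.fst = y.map Prod.fst := by
  obtain ⟨i, u, w, -, rfl, rfl⟩ := glueCopies_adj.1 h
  rw [map_fst_of_mem_range_lift ⟨u, rfl⟩ hx, map_fst_of_mem_range_lift ⟨w, rfl⟩ hy]

theorem exists_subset_range_lift_of_connected {S : Set (Option (Fin k × {u : V // u ≠ v₀}))}
    (hS : ((glueCopies G v₀ k).induce S).Connected) (h : none ∉ S) :
    ∃ i, S ⊆ Set.range (lift v₀ i) := by
  have hne : ∀ x ∈ S, x ≠ none := fun x hx h' => h (h' ▸ hx)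
  obtain ⟨⟨x₀, hx₀⟩⟩ := hS.nonempty
  obtain ⟨⟨i, u⟩, rfl⟩ := Option.ne_none_iff_exists'.1 (hne x₀ hx₀)
  refine ⟨i, fun x hx => mem_range_lift_of_map_fst ?_⟩
  have hidx : ∀ ⦃y z : S⦄, ((glueCopies G v₀ k).induce S).Adj y z →
      y.1.map Prod.fst = z.1.map Prod.fst :=
    fun y z hyz => map_fst_eq_of_adj hyz (hne y y.2) (hne z z.2)
  exact (hS.preconnected ⟨x, hx⟩ ⟨_, hx₀⟩).eq_of_forall_adj_eq hidx

theorem isMinorModel_fold {f : α → Set (Option (Fin k × {u : V // u ≠ v₀}))}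
    (hf : (glueCopies G v₀ k).IsMinorModel H f) {i : Fin k}
    (hi : ∀ a, none ∉ f a → f a ⊆ Set.range (lift v₀ i)) :
    G.IsMinorModel H fun a => fold i '' f a := by
  have hdisj : ∀ a b, a ≠ b → none ∉ f b → Disjoint (fold i '' f a) (fold i '' f b) := by
    rintro a b hab hb
    rw [Set.disjoint_left]
    rintro _ ⟨x, hx, rfl⟩ ⟨y, hy, hxy⟩
    obtain ⟨w, rfl⟩ := hi b hb hy
    rw [fold_lift_self] at hxy
    by_cases hx' : x ∈ Set.range (lift v₀ i)
    · obtain ⟨u, rfl⟩ := hx'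
      rw [fold_lift_self] at hxy
      exact Set.disjoint_left.1 (hf.disjoint hab) hx (hxy ▸ hy)
    · rw [fold_of_notMem_range_lift hx'] at hxy
      exact hb (by simpa [hxy] using hy)
  refine hf.image (isWeakHom_fold i) fun a b hab => ?_
  by_cases hb : none ∈ f b
  · exact (hdisj b a hab.symm fun ha => Set.disjoint_left.1 (hf.disjoint hab) ha hb).symm
  · exact hdisj a b hab hb

/-- Branch sets avoiding the glue vertex each lie in one copy, and they all lie in the same one
because `H` stays connected after deleting the (at most one) branch set through the glue vertex. -/
theorem exists_subset_range_lift [Fintype α] (hH : TwoConnected H)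
    {f : α → Set (Option (Fin k × {u : V // u ≠ v₀}))}
    (hf : (glueCopies G v₀ k).IsMinorModel H f) :
    ∃ i, ∀ a, none ∉ f a → f a ⊆ Set.range (lift v₀ i) := by
  set S := {a | none ∉ f a}
  have hS : Sᶜ.Subsingleton := fun a ha b hb => by
    by_contra hab
    exact Set.disjoint_left.1 (hf.disjoint hab) (not_not.1 ha) (not_not.1 hb)
  have hSconn := hH.connected_induce_of_subsingleton_compl hS
  choose I hI using fun a : S => exists_subset_range_lift_of_connected (hf.connected a) a.2
  have hIadj : ∀ ⦃a b : S⦄, (H.induce S).Adj a b → I a = I b := by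
    intro a b hab
    obtain ⟨u, hu, w, hw, huw⟩ := hf.adj a b hab
    have hu₀ : u ≠ none := fun h => a.2 (h ▸ hu)
    have hw₀ : w ≠ none := fun h => b.2 (h ▸ hw)
    refine Option.some_injective _ ?_
    rw [← map_fst_of_mem_range_lift (hI a hu) hu₀,
      ← map_fst_of_mem_range_lift (hI b hw) hw₀]
    exact map_fst_eq_of_adj huw hu₀ hw₀
  obtain ⟨a₁⟩ := hSconn.nonempty
  refine ⟨I a₁, fun a ha => ?_⟩
  rw [← (hSconn.preconnected ⟨a, ha⟩ a₁).eq_of_forall_adj_eq hIadj]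
  exact hI ⟨a, ha⟩

variable (G v₀ k) in
def liftDart (p : Fin k × G.Dart) : (glueCopies G v₀ k).Dart :=
  ⟨(lift v₀ p.1 p.2.fst, lift v₀ p.1 p.2.snd),
    glueCopies_adj.2 ⟨p.1, _, _, p.2.adj, rfl, rfl⟩⟩

theorem bijective_liftDart : Function.Bijective (liftDart G v₀ k) := by
  refine ⟨fun ⟨i, d⟩ ⟨j, d'⟩ h => ?_, fun d => ?_⟩
  · obtain ⟨⟨hfst, hi⟩, ⟨hsnd, hi'⟩⟩ := Prod.ext_iff.1 (congrArg Dart.toProd h) |>.imp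
      lift_eq_lift_iff.1 lift_eq_lift_iff.1
    have hij : i = j :=
      hi.elim (fun h₁ => hi'.resolve_left fun h₂ => d.adj.ne (h₁.trans h₂.symm)) id
    exact Prod.ext hij (Dart.ext _ _ (Prod.ext hfst hsnd))
  · obtain ⟨i, u, w, huw, hu, hw⟩ := glueCopies_adj.1 d.adj
    exact ⟨(i, ⟨(u, w), huw⟩), Dart.ext _ _ (Prod.ext hu hw)⟩

end GlueCopies

theorem not_hasMinor_glueCopies [Fintype α] (hH : TwoConnected H) (hG : ¬ G.HasMinor H)
    (v₀ : V) (k : ℕ) : ¬ (glueCopies G v₀ k).HasMinor H := by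
  rw [hasMinor_iff_exists_isMinorModel] at hG ⊢
  rintro ⟨f, hf⟩
  obtain ⟨i, hi⟩ := exists_subset_range_lift hH hf
  exact hG ⟨_, isMinorModel_fold hf hi⟩

theorem card_edgeSet_glueCopies [Fintype V] :
    Nat.card (glueCopies G v₀ k).edgeSet = k * Nat.card G.edgeSet := by
  have h := Nat.card_eq_of_bijective _ (bijective_liftDart (G := G) (v₀ := v₀) (k := k))
  rw [Nat.card_prod, Nat.card_fin, card_dart_eq_two_mul_card_edgeSet,
    card_dart_eq_two_mul_card_edgeSet] at h
  linarith

theorem card_glueCopies_vertices [Fintype V] :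
    Fintype.card (Option (Fin k × {u : V // u ≠ v₀})) = k * (Fintype.card V - 1) + 1 := by
  simp [Fintype.card_subtype_compl]

end SimpleGraph

theorem Real.sSup_eq_of_upperBounds_eq {s t : Set ℝ} (h : upperBounds s = upperBounds t) :
    sSup s = sSup t := by
  have hne : ∀ {s t : Set ℝ}, upperBounds s = upperBounds t → s.Nonempty → t.Nonempty := by
    rintro s t h ⟨x, hx⟩
    by_contra ht
    have : x - 1 ∈ upperBounds s := by simp [h, Set.not_nonempty_iff_eq_empty.1 ht]
    linarith [this hx]
  rcases s.eq_empty_or_nonempty with rfl | hs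
  · rcases t.eq_empty_or_nonempty with rfl | ht
    · rfl
    · exact absurd (hne h.symm ht) Set.not_nonempty_empty
  by_cases hb : BddAbove s
  · exact (((isLUB_congr h).1 (isLUB_csSup hs hb)).csSup_eq (hne h hs)).symm
  · have ht : ¬ BddAbove t := fun ht => hb (by rwa [BddAbove, h])
    rw [Real.sSup_of_not_bddAbove hb, Real.sSup_of_not_bddAbove ht]

theorem tendsto_mul_div_mul_add_one (a : ℝ) {d : ℝ} (hd : 0 < d) :
    Tendsto (fun k : ℕ => k * a / (k * d + 1)) atTop (𝓝 (a / d)) := by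
  have h := (tendsto_natCast_div_add_atTop (𝕜 := ℝ) d⁻¹).const_mul (a / d)
  rw [mul_one] at h
  refine h.congr fun k => ?_
  field_simp

open SimpleGraph

section Densities

variable {α : Type*} {H : SimpleGraph α}

def cFunSet (H : SimpleGraph α) : Set ℝ :=
  {x | ∃ (n : ℕ) (G : SimpleGraph (Fin n)), 0 < n ∧ ¬ G.HasMinor H ∧
    x = (Nat.card G.edgeSet : ℝ) / (n : ℝ)}

def cPrimeSet (H : SimpleGraph α) : Set ℝ :=
  {x | ∃ (n : ℕ) (G : SimpleGraph (Fin n)), 2 ≤ n ∧ ¬ G.HasMinor H ∧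
    x = (Nat.card G.edgeSet : ℝ) / ((n : ℝ) - 1)}

theorem div_card_mem_cFunSet {W : Type*} [Fintype W] (G : SimpleGraph W)
    (hW : 0 < Fintype.card W) (hG : ¬ G.HasMinor H) :
    (Nat.card G.edgeSet : ℝ) / Fintype.card W ∈ cFunSet H := by
  let e := Fintype.equivFin W
  refine ⟨_, G.map e.toEmbedding, hW, fun h => hG (h.map (Iso.map e G).symm.toEmbedding), ?_⟩
  rw [Nat.card_congr (Iso.map e G).mapEdgeSet]
  rfl

theorem cPrimeSet_subset_closure_cFunSet [Fintype α] (hH : TwoConnected H) :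
    cPrimeSet H ⊆ closure (cFunSet H) := by
  rintro _ ⟨n, G, hn, hG, rfl⟩
  obtain ⟨m, rfl⟩ : ∃ m, n = m + 1 := ⟨n - 1, by omega⟩
  have key : ∀ k : ℕ, (k * Nat.card G.edgeSet : ℝ) / (k * m + 1) ∈ cFunSet H := fun k => by
    have h := div_card_mem_cFunSet (glueCopies G 0 k) (by simp) (not_hasMinor_glueCopies hH hG 0 k)
    rw [card_edgeSet_glueCopies, card_glueCopies_vertices] at h
    simpa using h
  push_cast
  rw [add_sub_cancel_right]
  exact mem_closure_of_tendsto (tendsto_mul_div_mul_add_one _ (by simp; omega))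
    (Eventually.of_forall key)

theorem exists_mem_cPrimeSet_ge [Fintype α] (hα : 2 < Fintype.card α) :
    ∀ x ∈ cFunSet H, ∃ y ∈ cPrimeSet H, x ≤ y := by
  rintro _ ⟨n, G, hn, hG, rfl⟩
  rcases Nat.lt_or_ge n 2 with hn₂ | hn₂
  · obtain rfl : n = 1 := by omega
    refine ⟨0, ⟨2, ⊥, le_rfl, not_hasMinor_of_card_lt _ (by simpa), by simp⟩, ?_⟩
    rw [Subsingleton.elim G ⊥]
    simp
  · refine ⟨_, ⟨n, G, hn₂, hG, rfl⟩, ?_⟩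
    have : (2 : ℝ) ≤ n := by exact_mod_cast hn₂
    gcongr <;> linarith

end Densities

/-- For a 2-connected graph `H`, `c'(H) = c(H)`. -/
theorem cPrime_eq_cFun {α : Type*} [Fintype α] (H : SimpleGraph α)
    (hH : TwoConnected H) : cPrime H = cFun H := by
  show sSup (cPrimeSet H) = sSup (cFunSet H)
  refine Real.sSup_eq_of_upperBounds_eq (subset_antisymm (fun b hb x hx => ?_) ?_)
  · obtain ⟨y, hy, hxy⟩ := exists_mem_cPrimeSet_ge hH.1 x hx
    exact hxy.trans (hb hy)
  · rw [← upperBounds_closure]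
    exact upperBounds_mono_set (cPrimeSet_subset_closure_cFunSet hH)
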